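/- Let M and N be regular sequences with lim_{n→∞} (N_n/n!)^{1/n} = ∞, let a > 0 and η > 1. Let f : ℝ → ℝ be infinitely differentiable on an open neighborhood of [0,a], and suppose there exists C > 0 such that |f⁽ⁿ⁾(x)| ≤ C^{n+1}·M_n for all x ∈ [0,a] and all n, and xⁿ·|f⁽ⁿ⁾(x)| ≤ C·N_n for all x ∈ (0,a] and all n. Then there exists C' > 0 such that the function g(ξ) = f(e^ξ) satisfies |g⁽ⁿ⁾(ξ)| ≤ C'·ηⁿ·N_n for all ξ ≤ log a and all n ∈ ℕ. -/

import Mathlib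

open Finset Real Filter


/-- Stirling numbers of the second kind. -/
def St : ℕ → ℕ → ℕ
  | 0, 0 => 1
  | 0, _ + 1 => 0
  | _ + 1, 0 => 0
  | n + 1, k + 1 => (k + 1) * St n (k + 1) + St n k

lemma St_eq_zero : ∀ n k : ℕ, n < k → St n k = 0
  | 0, _ + 1, _ => rfl
  | n + 1, k + 1, h => by
      have h1 := St_eq_zero n (k + 1) (by omega)
      have h2 := St_eq_zero n k (by omega)
      simp [St, h1, h2]

lemma St_le (n : ℕ) : ∀ k : ℕ, St n k ≤ n.choose k * k ^ (n - k) := by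
  induction n with
  | zero =>
      rintro (_ | k)
      · simp [St]
      · simp [St, St_eq_zero 0 (k+1) (by omega)]
  | succ n ih =>
      rintro (_ | k)
      · simp [St]
      · show (k + 1) * St n (k + 1) + St n k ≤ _
        have h1 : (k + 1) * St n (k + 1) ≤ n.choose (k + 1) * (k + 1) ^ (n - k) := by
          by_cases hk : k + 1 ≤ n
          · calc (k + 1) * St n (k + 1) ≤ (k + 1) * (n.choose (k + 1) * (k + 1) ^ (n - (k + 1))) :=
                Nat.mul_le_mul_left _ (ih (k + 1))
            _ = n.choose (k + 1) * ((k + 1) ^ (n - (k + 1)) * (k + 1)) := by ring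
            _ = n.choose (k + 1) * (k + 1) ^ (n - k) := by
                have he : n - (k + 1) + 1 = n - k := by omega
                rw [← pow_succ, he]
          · have hz : St n (k + 1) = 0 := St_eq_zero n (k + 1) (by omega)
            have hc : n.choose (k + 1) = 0 := Nat.choose_eq_zero_of_lt (by omega)
            simp [hz, hc]
        have h2 : St n k ≤ n.choose k * (k + 1) ^ (n - k) :=
          le_trans (ih k) (Nat.mul_le_mul_left _ (Nat.pow_le_pow_left (by omega) _))
        calc (k + 1) * St n (k + 1) + St n k
            ≤ n.choose (k + 1) * (k + 1) ^ (n - k) + n.choose k * (k + 1) ^ (n - k) := by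
              exact Nat.add_le_add h1 h2
          _ = ((n + 1).choose (k + 1)) * (k + 1) ^ (n + 1 - (k + 1)) := by
              rw [Nat.choose_succ_succ']
              have : n + 1 - (k + 1) = n - k := by omega
              rw [this]; ring

lemma St_mul_le (n k : ℕ) (hk : k ≤ n) :
    St n k * k.factorial * (n - k).factorial ≤ n.factorial * n ^ (n - k) := by
  calc St n k * k.factorial * (n - k).factorial
      ≤ (n.choose k * k ^ (n - k)) * k.factorial * (n - k).factorial :=
        Nat.mul_le_mul_right _ (Nat.mul_le_mul_right _ (St_le n k))
    _ = (n.choose k * k.factorial * (n - k).factorial) * k ^ (n - k) := by ring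
    _ = n.factorial * k ^ (n - k) := by rw [Nat.choose_mul_factorial_mul_factorial hk]
    _ ≤ n.factorial * n ^ (n - k) := Nat.mul_le_mul_left _ (Nat.pow_le_pow_left hk _)

lemma st_sum_id (n : ℕ) (E : ℕ → ℝ) :
    ∑ k ∈ range (n + 1), ((St n k : ℝ) * k * E k + (St n k : ℝ) * E (k + 1)) =
      ∑ k ∈ range (n + 2), (St (n + 1) k : ℝ) * E k := by
  have hA : ∑ k ∈ range (n + 1), (St n k : ℝ) * k * E k
      = ∑ k ∈ range (n + 1), ((k : ℝ) + 1) * (St n (k + 1) : ℝ) * E (k + 1) := by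
    rw [Finset.sum_range_succ' (fun k => (St n k : ℝ) * k * E k) n,
        Finset.sum_range_succ (fun k => ((k : ℝ) + 1) * (St n (k + 1) : ℝ) * E (k + 1)) n]
    have hz : St n (n + 1) = 0 := St_eq_zero n (n + 1) (by omega)
    simp [hz]
    apply Finset.sum_congr rfl
    intro k _
    push_cast; ring
  rw [Finset.sum_add_distrib, hA,
      Finset.sum_range_succ' (fun k => (St (n + 1) k : ℝ) * E k) (n + 1)]
  have h0 : (St (n + 1) 0 : ℝ) * E 0 = 0 := by simp [St]
  rw [h0, add_zero, ← Finset.sum_add_distrib]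
  apply Finset.sum_congr rfl
  intro k _
  show _ = (St (n + 1) (k + 1) : ℝ) * E (k + 1)
  have hr : St (n + 1) (k + 1) = (k + 1) * St n (k + 1) + St n k := rfl
  rw [hr]; push_cast; ring


lemma contDiffAt_iteratedDeriv {f : ℝ → ℝ} {U : Set ℝ} (hU : IsOpen U)
    (hf : ContDiffOn ℝ (⊤ : ℕ∞) f U) (k : ℕ) :
    ∀ x ∈ U, ContDiffAt ℝ (⊤ : ℕ∞) (iteratedDeriv k f) x := by
  induction k with
  | zero =>
      intro x hx
      simpa using hf.contDiffAt (hU.mem_nhds hx)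
  | succ k ih =>
      intro x hx
      rw [iteratedDeriv_succ]
      have h1 : ContDiffAt ℝ (⊤ : ℕ∞) (fderiv ℝ (iteratedDeriv k f)) x :=
        (ih x hx).fderiv_right (by simp)
      have h2 : ContDiffAt ℝ (⊤ : ℕ∞)
          (fun y => fderiv ℝ (iteratedDeriv k f) y (1 : ℝ)) x :=
        (ContinuousLinearMap.apply ℝ ℝ (1 : ℝ)).contDiff.comp_contDiffAt x h1
      exact h2.congr_of_eventuallyEq (Filter.Eventually.of_forall fun y => rfl)

lemma hasDerivAt_iteratedDeriv {f : ℝ → ℝ} {U : Set ℝ} (hU : IsOpen U)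
    (hf : ContDiffOn ℝ (⊤ : ℕ∞) f U) (k : ℕ) {x : ℝ} (hx : x ∈ U) :
    HasDerivAt (iteratedDeriv k f) (iteratedDeriv (k + 1) f x) x := by
  have hd : DifferentiableAt ℝ (iteratedDeriv k f) x :=
    (contDiffAt_iteratedDeriv hU hf k x hx).differentiableAt (by simp)
  simpa [iteratedDeriv_succ] using hd.hasDerivAt

lemma deriv_formula {f : ℝ → ℝ} {U : Set ℝ} (hU : IsOpen U)
    (hf : ContDiffOn ℝ (⊤ : ℕ∞) f U) (g : ℝ → ℝ) (hg : ∀ ξ, g ξ = f (Real.exp ξ)) :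
    ∀ n : ℕ, ∀ ξ : ℝ, Real.exp ξ ∈ U →
      iteratedDeriv n g ξ =
        ∑ k ∈ range (n + 1), (St n k : ℝ) * Real.exp (k * ξ) * iteratedDeriv k f (Real.exp ξ) := by
  intro n
  induction n with
  | zero =>
      intro ξ hξ
      simp [St, hg ξ]
  | succ n ih =>
      intro ξ hξ
      have hV : IsOpen (Real.exp ⁻¹' U) := Real.continuous_exp.isOpen_preimage U hU
      have hev : iteratedDeriv n g =ᶠ[nhds ξ]
          fun ζ => ∑ k ∈ range (n + 1),
            (St n k : ℝ) * Real.exp (k * ζ) * iteratedDeriv k f (Real.exp ζ) := by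
        filter_upwards [hV.mem_nhds hξ] with ζ hζ
        exact ih ζ hζ
      rw [iteratedDeriv_succ, hev.deriv_eq]
      have hterm : ∀ k ∈ range (n + 1),
          HasDerivAt (fun ζ => (St n k : ℝ) * Real.exp (k * ζ) * iteratedDeriv k f (Real.exp ζ))
            ((St n k : ℝ) * (Real.exp ((k : ℝ) * ξ) * k) * iteratedDeriv k f (Real.exp ξ)
              + (St n k : ℝ) * Real.exp ((k : ℝ) * ξ)
                * (iteratedDeriv (k + 1) f (Real.exp ξ) * Real.exp ξ)) ξ := by
        intro k _
        have h1 : HasDerivAt (fun ζ : ℝ => (k : ℝ) * ζ) (k : ℝ) ξ := by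
          simpa using (hasDerivAt_id ξ).const_mul (k : ℝ)
        have hE : HasDerivAt (fun ζ : ℝ => Real.exp ((k : ℝ) * ζ))
            (Real.exp ((k : ℝ) * ξ) * (k : ℝ)) ξ := h1.exp
        have hG : HasDerivAt (fun ζ : ℝ => iteratedDeriv k f (Real.exp ζ))
            (iteratedDeriv (k + 1) f (Real.exp ξ) * Real.exp ξ) ξ :=
          (hasDerivAt_iteratedDeriv hU hf k hξ).comp ξ (Real.hasDerivAt_exp ξ)
        exact (hE.const_mul (St n k : ℝ)).mul hG
      have hsum := HasDerivAt.fun_sum hterm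
      rw [hsum.deriv]
      have hR : (∑ k ∈ range (n + 1 + 1),
            (St (n + 1) k : ℝ) * Real.exp (k * ξ) * iteratedDeriv k f (Real.exp ξ))
          = ∑ k ∈ range (n + 2),
            (St (n + 1) k : ℝ) * (Real.exp (k * ξ) * iteratedDeriv k f (Real.exp ξ)) :=
        Finset.sum_congr rfl fun k _ => by ring
      rw [hR, ← st_sum_id n (fun k => Real.exp (k * ξ) * iteratedDeriv k f (Real.exp ξ))]
      apply Finset.sum_congr rfl
      intro k _
      have hx : Real.exp (((k + 1 : ℕ) : ℝ) * ξ) = Real.exp ((k : ℝ) * ξ) * Real.exp ξ := by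
        rw [← Real.exp_add]
        congr 1
        push_cast
        ring
      simp only [hx]
      ring

lemma analytic_bound (m : ℕ → ℝ) (hm : ∀ n, 0 < m n) (n₁ : ℕ)
    (hmono : ∀ n : ℕ, n₁ ≤ n → 1 ≤ n →
      m n ^ ((1 : ℝ) / (n : ℝ)) ≤ m (n + 1) ^ ((1 : ℝ) / ((n : ℝ) + 1)))
    (hτ : Tendsto (fun n : ℕ => m n ^ ((1 : ℝ) / (n : ℝ))) atTop atTop)
    (η : ℝ) (hη : 1 < η) :
    ∃ C₂ : ℝ, 0 < C₂ ∧ ∀ n : ℕ,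
      ∑ k ∈ range (n + 1), ((n : ℝ) ^ (n - k) / ((n - k).factorial : ℝ)) * m k ≤
        C₂ * η ^ n * m n := by
  have hη0 : (0:ℝ) < η := lt_trans one_pos hη
  set t : ℕ → ℝ := fun n => m n ^ ((1 : ℝ) / (n : ℝ)) with ht
  have htpos : ∀ n, 0 < t n := fun n => Real.rpow_pos_of_pos (hm n) _
  have htn : ∀ n : ℕ, 1 ≤ n → t n ^ n = m n := by
    intro n hn
    have hn0 : (n : ℝ) ≠ 0 := Nat.cast_ne_zero.mpr (by omega)
    rw [ht]
    rw [← Real.rpow_natCast (m n ^ ((1 : ℝ) / (n : ℝ))) n, ← Real.rpow_mul (hm n).le,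
      one_div_mul_cancel hn0, Real.rpow_one]
  have hchain : ∀ k n : ℕ, n₁ ≤ k → 1 ≤ k → k ≤ n → t k ≤ t n := by
    intro k n hk1 hk2 hkn
    induction n, hkn using Nat.le_induction with
    | base => exact le_rfl
    | succ n hn ih =>
        refine le_trans ih ?_
        have := hmono n (le_trans hk1 hn) (le_trans hk2 hn)
        rw [ht]
        push_cast
        exact this
  -- threshold
  have hlog : 0 < Real.log η := Real.log_pos hη
  set T : ℝ := max (1 / Real.log η) (Real.exp 1 / η) with hT
  obtain ⟨n₂, hn₂⟩ : ∃ n₂ : ℕ, ∀ n, n₂ ≤ n → T ≤ t n :=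
    eventually_atTop.mp (hτ.eventually_ge_atTop T)
  set K : ℕ := max n₁ 1 with hK
  set n₃ : ℕ := max n₂ K with hn₃
  set B : ℝ := ∑ k ∈ range K, m k with hB
  have hBpos : 0 ≤ B := Finset.sum_nonneg fun k _ => (hm k).le
  have hmain : ∀ n : ℕ, n₃ ≤ n →
      ∑ k ∈ range (n + 1), ((n : ℝ) ^ (n - k) / ((n - k).factorial : ℝ)) * m k ≤
        (1 + B) * η ^ n * m n := by
    intro n hn
    have hn1 : 1 ≤ n := le_trans (le_trans (le_max_right n₁ 1) (le_max_right n₂ K)) hn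
    have htT : T ≤ t n := hn₂ n (le_trans (le_max_left n₂ K) hn)
    have htn_pos : 0 < t n := htpos n
    have hKn : K ≤ n := le_trans (le_max_right n₂ K) hn
    -- split the sum
    have hsplit : range (n + 1) = range K ∪ Ico K (n + 1) := by
      rw [Finset.range_eq_Ico, Finset.range_eq_Ico, Finset.Ico_union_Ico_eq_Ico (by omega) (by omega)]
    have hdisj : Disjoint (range K) (Ico K (n + 1)) := by
      refine Finset.disjoint_left.mpr fun k hk1 hk2 => ?_
      rw [Finset.mem_range] at hk1
      rw [Finset.mem_Ico] at hk2
      omega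
    rw [hsplit, Finset.sum_union hdisj]
    -- small k part
    have hsmall : ∑ k ∈ range K, ((n : ℝ) ^ (n - k) / ((n - k).factorial : ℝ)) * m k ≤
        B * (η ^ n * m n) := by
      have hterm : ∀ k ∈ range K,
          ((n : ℝ) ^ (n - k) / ((n - k).factorial : ℝ)) * m k ≤ (η ^ n * m n) * m k := by
        intro k _
        have h1 : ((n : ℝ) ^ (n - k) / ((n - k).factorial : ℝ)) ≤ Real.exp (n : ℝ) :=
          Real.pow_div_factorial_le_exp _ (Nat.cast_nonneg n) _
        have h2 : Real.exp (n : ℝ) ≤ η ^ n * m n := by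
          have he1 : Real.exp 1 ≤ η * t n := by
            have : Real.exp 1 / η ≤ t n := le_trans (le_max_right _ _) htT
            calc Real.exp 1 = η * (Real.exp 1 / η) := by
                  field_simp
              _ ≤ η * t n := by
                  exact mul_le_mul_of_nonneg_left this (by linarith)
          calc Real.exp (n : ℝ) = Real.exp 1 ^ n := by
                rw [← Real.exp_nat_mul]; norm_num
            _ ≤ (η * t n) ^ n := pow_le_pow_left₀ (Real.exp_pos 1).le he1 n
            _ = η ^ n * t n ^ n := mul_pow _ _ _
            _ = η ^ n * m n := by rw [htn n hn1]
        exact mul_le_mul_of_nonneg_right (h1.trans h2) (hm k).le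
      calc ∑ k ∈ range K, ((n : ℝ) ^ (n - k) / ((n - k).factorial : ℝ)) * m k
          ≤ ∑ k ∈ range K, (η ^ n * m n) * m k := Finset.sum_le_sum hterm
        _ = B * (η ^ n * m n) := by rw [← Finset.mul_sum, hB, mul_comm]
    -- large k part
    have hlarge : ∑ k ∈ Ico K (n + 1), ((n : ℝ) ^ (n - k) / ((n - k).factorial : ℝ)) * m k ≤
        η ^ n * m n := by
      have hstep1 : ∀ k ∈ Ico K (n + 1),
          ((n : ℝ) ^ (n - k) / ((n - k).factorial : ℝ)) * m k ≤
            ((n : ℝ) ^ (n - k) / ((n - k).factorial : ℝ)) * t n ^ k := by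
        intro k hk
        rw [Finset.mem_Ico] at hk
        have hk1 : 1 ≤ k := le_trans (le_max_right n₁ 1) hk.1
        have hkn1 : n₁ ≤ k := le_trans (le_max_left n₁ 1) hk.1
        have : m k = t k ^ k := (htn k hk1).symm
        rw [this]
        have : t k ^ k ≤ t n ^ k :=
          pow_le_pow_left₀ (htpos k).le (hchain k n hkn1 hk1 (by omega)) k
        exact mul_le_mul_of_nonneg_left this (by positivity)
      calc ∑ k ∈ Ico K (n + 1), ((n : ℝ) ^ (n - k) / ((n - k).factorial : ℝ)) * m k
          ≤ ∑ k ∈ Ico K (n + 1), ((n : ℝ) ^ (n - k) / ((n - k).factorial : ℝ)) * t n ^ k :=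
            Finset.sum_le_sum hstep1
        _ ≤ ∑ k ∈ range (n + 1), ((n : ℝ) ^ (n - k) / ((n - k).factorial : ℝ)) * t n ^ k := by
            refine Finset.sum_le_sum_of_subset_of_nonneg ?_ (fun k _ _ => by positivity)
            rw [Finset.range_eq_Ico]
            exact Finset.Ico_subset_Ico (by omega) le_rfl
        _ = ∑ j ∈ range (n + 1), ((n : ℝ) ^ j / (j.factorial : ℝ)) * t n ^ (n - j) := by
            rw [← Finset.sum_range_reflect]
            apply Finset.sum_congr rfl
            intro j hj
            rw [Finset.mem_range] at hj
            have h1 : n - (n - j) = j := by omega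
            have h2 : n + 1 - 1 - j = n - j := by omega
            rw [h2, h1]
        _ = ∑ j ∈ range (n + 1), t n ^ n * (((n : ℝ) / t n) ^ j / (j.factorial : ℝ)) := by
            apply Finset.sum_congr rfl
            intro j hj
            rw [Finset.mem_range] at hj
            rw [div_pow, pow_sub₀ _ (ne_of_gt htn_pos) (by omega)]
            field_simp
        _ = t n ^ n * ∑ j ∈ range (n + 1), (((n : ℝ) / t n) ^ j / (j.factorial : ℝ)) := by
            rw [Finset.mul_sum]
        _ ≤ t n ^ n * Real.exp ((n : ℝ) / t n) := by
            refine mul_le_mul_of_nonneg_left ?_ (by positivity)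
            exact Real.sum_le_exp_of_nonneg (by positivity) _
        _ ≤ t n ^ n * η ^ n := by
            refine mul_le_mul_of_nonneg_left ?_ (by positivity)
            have h1T : 1 / Real.log η ≤ t n := le_trans (le_max_left _ _) htT
            have : (n : ℝ) / t n ≤ n * Real.log η := by
              rw [div_le_iff₀ htn_pos]
              calc (n : ℝ) = n * (Real.log η * (1 / Real.log η)) := by field_simp
                _ ≤ n * (Real.log η * t n) := by
                    refine mul_le_mul_of_nonneg_left ?_ (Nat.cast_nonneg n)
                    exact mul_le_mul_of_nonneg_left h1T hlog.le
                _ = n * Real.log η * t n := by ring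
            calc Real.exp ((n : ℝ) / t n) ≤ Real.exp (n * Real.log η) := Real.exp_le_exp.mpr this
              _ = η ^ n := by rw [Real.exp_nat_mul, Real.exp_log (by linarith)]
        _ = η ^ n * m n := by rw [htn n hn1, mul_comm]
    calc _ ≤ B * (η ^ n * m n) + η ^ n * m n := add_le_add hsmall hlarge
      _ = (1 + B) * η ^ n * m n := by ring
  -- absorb small n
  set S : ℕ → ℝ := fun n => ∑ k ∈ range (n + 1), ((n : ℝ) ^ (n - k) / ((n - k).factorial : ℝ)) * m k
    with hS
  set C₂ : ℝ := (1 + B) + ∑ i ∈ range n₃, S i / (η ^ i * m i) with hC₂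
  have hquot_nonneg : ∀ i, 0 ≤ S i / (η ^ i * m i) := by
    intro i
    have hSpos : 0 ≤ S i := Finset.sum_nonneg fun k _ =>
      mul_nonneg (by positivity) (hm k).le
    exact div_nonneg hSpos (mul_pos (pow_pos hη0 i) (hm i)).le
  have hC₂pos : 0 < C₂ := by
    have : 0 ≤ ∑ i ∈ range n₃, S i / (η ^ i * m i) := Finset.sum_nonneg fun i _ => hquot_nonneg i
    rw [hC₂]; linarith
  refine ⟨C₂, hC₂pos, fun n => ?_⟩
  by_cases hn : n₃ ≤ n
  · calc S n ≤ (1 + B) * η ^ n * m n := hmain n hn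
      _ ≤ C₂ * η ^ n * m n := by
        have h1 : (1 + B) ≤ C₂ := by
          have : 0 ≤ ∑ i ∈ range n₃, S i / (η ^ i * m i) :=
            Finset.sum_nonneg fun i _ => hquot_nonneg i
          rw [hC₂]; linarith
        have : 0 ≤ η ^ n * m n := (mul_pos (pow_pos hη0 n) (hm n)).le
        nlinarith
  · push_neg at hn
    have hmem : n ∈ range n₃ := Finset.mem_range.mpr hn
    have h1 : S n / (η ^ n * m n) ≤ C₂ := by
      rw [hC₂]
      have h2 : S n / (η ^ n * m n) ≤ ∑ i ∈ range n₃, S i / (η ^ i * m i) :=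
        Finset.single_le_sum (fun i _ => hquot_nonneg i) hmem
      linarith
    have hpos : 0 < η ^ n * m n := mul_pos (pow_pos hη0 n) (hm n)
    calc S n = S n / (η ^ n * m n) * (η ^ n * m n) := by rw [div_mul_cancel₀ _ hpos.ne']
      _ ≤ C₂ * (η ^ n * m n) := mul_le_mul_of_nonneg_right h1 hpos.le
      _ = C₂ * η ^ n * m n := by ring

/-- A sequence `M`, written `M n = n! · m n` with `m n = M n / n!`, is *regular* if it is
positive, `(m n)` is eventually log-convex, `(m n)^{1/n}` is eventually non-decreasing, and
`m (n+1) ≤ C · (m n)^{1 + 1/n}` for some `C > 0` and all `n ≥ 1`. -/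
def RegularSeq (M : ℕ → ℝ) : Prop :=
  (∀ n, 0 < M n) ∧
  (∃ n₀ : ℕ, ∀ n : ℕ, n₀ ≤ n →
      (M (n + 1) / ((n + 1).factorial : ℝ)) ^ 2 ≤
        (M n / (n.factorial : ℝ)) * (M (n + 2) / ((n + 2).factorial : ℝ))) ∧
  (∃ n₁ : ℕ, ∀ n : ℕ, n₁ ≤ n → 1 ≤ n →
      (M n / (n.factorial : ℝ)) ^ ((1 : ℝ) / (n : ℝ)) ≤
        (M (n + 1) / ((n + 1).factorial : ℝ)) ^ ((1 : ℝ) / ((n : ℝ) + 1))) ∧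
  (∃ C : ℝ, 0 < C ∧ ∀ n : ℕ, 1 ≤ n →
      M (n + 1) / ((n + 1).factorial : ℝ) ≤
        C * (M n / (n.factorial : ℝ)) ^ ((1 : ℝ) + 1 / (n : ℝ)))

/-- (`C₁(M,N;[0,a]) ⊆ B_η(M,N;[0,a])`, non-analytic case.)
If `f` is smooth near `[0,a]` with `|f⁽ⁿ⁾| ≤ C^{n+1} M_n` on `[0,a]` and
`xⁿ|f⁽ⁿ⁾(x)| ≤ C N_n` on `(0,a]`, then `g ξ = f (e^ξ)` satisfies
`|g⁽ⁿ⁾(ξ)| ≤ C' ηⁿ N_n` for all `ξ ≤ log a`. -/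
theorem stmt_5
    (M N : ℕ → ℝ) (hM : RegularSeq M) (hN : RegularSeq N)
    (hτ : Filter.Tendsto (fun n : ℕ => (N n / (n.factorial : ℝ)) ^ ((1 : ℝ) / (n : ℝ)))
      Filter.atTop Filter.atTop)
    (a : ℝ) (ha : 0 < a) (η : ℝ) (hη : 1 < η)
    (f : ℝ → ℝ) (U : Set ℝ) (hU : IsOpen U) (hUa : Set.Icc (0 : ℝ) a ⊆ U)
    (hf : ContDiffOn ℝ (⊤ : ℕ∞) f U)
    (g : ℝ → ℝ) (hg : ∀ ξ : ℝ, g ξ = f (Real.exp ξ))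
    (C : ℝ) (hC : 0 < C)
    (hbd1 : ∀ x ∈ Set.Icc (0 : ℝ) a, ∀ n : ℕ, |iteratedDeriv n f x| ≤ C ^ (n + 1) * M n)
    (hbd2 : ∀ x ∈ Set.Ioc (0 : ℝ) a, ∀ n : ℕ, x ^ n * |iteratedDeriv n f x| ≤ C * N n) :
    ∃ C' : ℝ, 0 < C' ∧ ∀ ξ : ℝ, ξ ≤ Real.log a → ∀ n : ℕ,
      |iteratedDeriv n g ξ| ≤ C' * η ^ n * N n := by
  set m : ℕ → ℝ := fun n => N n / (n.factorial : ℝ) with hm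
  have hmpos : ∀ n, 0 < m n := fun n =>
    div_pos (hN.1 n) (Nat.cast_pos.mpr n.factorial_pos)
  obtain ⟨n₁, hmono⟩ := hN.2.2.1
  obtain ⟨C₂, hC₂pos, hC₂⟩ := analytic_bound m hmpos n₁ hmono hτ η hη
  refine ⟨C * C₂, mul_pos hC hC₂pos, ?_⟩
  intro ξ hξ n
  have hx0 : 0 < Real.exp ξ := Real.exp_pos ξ
  have hxa : Real.exp ξ ≤ a := by
    calc Real.exp ξ ≤ Real.exp (Real.log a) := Real.exp_le_exp.mpr hξ
      _ = a := Real.exp_log ha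
  have hxU : Real.exp ξ ∈ U := hUa ⟨hx0.le, hxa⟩
  rw [deriv_formula hU hf g hg n ξ hxU]
  have habs : ∀ k ∈ range (n + 1),
      |(St n k : ℝ) * Real.exp (k * ξ) * iteratedDeriv k f (Real.exp ξ)| ≤
        (St n k : ℝ) * (C * N k) := by
    intro k _
    rw [abs_mul, abs_mul, abs_of_nonneg (Nat.cast_nonneg (St n k)),
      abs_of_nonneg (Real.exp_nonneg _)]
    have hxk : Real.exp ((k : ℝ) * ξ) = Real.exp ξ ^ k := by
      rw [Real.exp_nat_mul]
    rw [hxk, mul_assoc]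
    exact mul_le_mul_of_nonneg_left (hbd2 _ ⟨hx0, hxa⟩ k) (Nat.cast_nonneg _)
  have hfact_pos : (0 : ℝ) < (n.factorial : ℝ) := Nat.cast_pos.mpr n.factorial_pos
  calc |∑ k ∈ range (n + 1), (St n k : ℝ) * Real.exp (k * ξ) * iteratedDeriv k f (Real.exp ξ)|
      ≤ ∑ k ∈ range (n + 1), |(St n k : ℝ) * Real.exp (k * ξ) * iteratedDeriv k f (Real.exp ξ)| :=
        Finset.abs_sum_le_sum_abs _ _
    _ ≤ ∑ k ∈ range (n + 1), (St n k : ℝ) * (C * N k) := Finset.sum_le_sum habs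
    _ = C * ∑ k ∈ range (n + 1), (St n k : ℝ) * N k := by
        rw [Finset.mul_sum]
        exact Finset.sum_congr rfl fun k _ => by ring
    _ ≤ C * (C₂ * η ^ n * N n) := by
        refine mul_le_mul_of_nonneg_left ?_ hC.le
        have hkey : ∑ k ∈ range (n + 1), (St n k : ℝ) * N k ≤
            (n.factorial : ℝ) *
              ∑ k ∈ range (n + 1), ((n : ℝ) ^ (n - k) / ((n - k).factorial : ℝ)) * m k := by
          rw [Finset.mul_sum]
          refine Finset.sum_le_sum fun k hk => ?_
          rw [Finset.mem_range] at hk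
          have hkn : k ≤ n := by omega
          have h1 : (St n k : ℝ) * (k.factorial : ℝ) * (((n - k).factorial : ℝ)) ≤
              (n.factorial : ℝ) * (n : ℝ) ^ (n - k) := by
            have := St_mul_le n k hkn
            exact_mod_cast this
          have h2 : (St n k : ℝ) * (k.factorial : ℝ) ≤
              (n.factorial : ℝ) * (n : ℝ) ^ (n - k) / (((n - k).factorial : ℝ)) := by
            rw [le_div_iff₀ (Nat.cast_pos.mpr (n - k).factorial_pos)]
            exact h1
          have hNk : N k = m k * (k.factorial : ℝ) := by
            rw [hm]
            field_simp
          rw [hNk]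
          calc (St n k : ℝ) * (m k * (k.factorial : ℝ))
              = ((St n k : ℝ) * (k.factorial : ℝ)) * m k := by ring
            _ ≤ ((n.factorial : ℝ) * (n : ℝ) ^ (n - k) / (((n - k).factorial : ℝ))) * m k :=
                mul_le_mul_of_nonneg_right h2 (hmpos k).le
            _ = (n.factorial : ℝ) * ((n : ℝ) ^ (n - k) / (((n - k).factorial : ℝ)) * m k) := by
                ring
        calc ∑ k ∈ range (n + 1), (St n k : ℝ) * N k
            ≤ (n.factorial : ℝ) *
              ∑ k ∈ range (n + 1), ((n : ℝ) ^ (n - k) / ((n - k).factorial : ℝ)) * m k := hkey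
          _ ≤ (n.factorial : ℝ) * (C₂ * η ^ n * m n) :=
              mul_le_mul_of_nonneg_left (hC₂ n) hfact_pos.le
          _ = C₂ * η ^ n * N n := by
              rw [hm]
              field_simp
    _ = C * C₂ * η ^ n * N n := by ring
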